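/- arXiv:2106.00026 — 7 statements merged into one kernel-verified Lean document; each statement's English description precedes it below -/
import Mathlib

section
/- Let V be a normed vector space, f ∈ V, S ⊆ V, and λ > 1. Then the minimization problem inf over (g,n) ∈ S × V of ‖f - g - n‖ + λ‖n‖ equals inf over g ∈ S of ‖f - g‖. Moreover, a pair (g, n) attains the infimum if and only if n = 0 and g attains inf over S of ‖f - g‖ (assuming these infima are attained). -/
theorem stmt_2 {V : Type*} [NormedAddCommGroup V] [NormedSpace ℝ V]
    (f : V) (S : Set V) (lam : ℝ) (hlam : 1 < lam)
    (hattain : ∃ g ∈ S, ∀ g' ∈ S, ‖f - g‖ ≤ ‖f - g'‖) :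
    sInf ((fun p : V × V => ‖f - p.1 - p.2‖ + lam * ‖p.2‖) '' (S ×ˢ Set.univ))
      = sInf ((fun g => ‖f - g‖) '' S) ∧
    ∀ g ∈ S, ∀ n : V,
      ((∀ g' ∈ S, ∀ n' : V,
          ‖f - g - n‖ + lam * ‖n‖ ≤ ‖f - g' - n'‖ + lam * ‖n'‖) ↔
        (n = 0 ∧ ∀ g' ∈ S, ‖f - g‖ ≤ ‖f - g'‖)) := by
  obtain ⟨g₀, hg₀S, hg₀⟩ := hattain
  have key : ∀ (g n : V), ‖f - g‖ ≤ ‖f - g - n‖ + lam * ‖n‖ := by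
    intro g n
    have h1 : ‖f - g‖ ≤ ‖f - g - n‖ + ‖n‖ := by
      calc ‖f - g‖ = ‖(f - g - n) + n‖ := by congr 1; abel
        _ ≤ ‖f - g - n‖ + ‖n‖ := norm_add_le _ _
    nlinarith [norm_nonneg n]
  have hBne : ((fun g => ‖f - g‖) '' S).Nonempty := ⟨_, ⟨g₀, hg₀S, rfl⟩⟩
  have hAne : ((fun p : V × V => ‖f - p.1 - p.2‖ + lam * ‖p.2‖) '' (S ×ˢ Set.univ)).Nonempty :=
    ⟨_, ⟨(g₀, 0), ⟨hg₀S, trivial⟩, rfl⟩⟩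
  have hBbdd : BddBelow ((fun g => ‖f - g‖) '' S) :=
    ⟨0, by rintro _ ⟨g, hg, rfl⟩; exact norm_nonneg _⟩
  have hAbdd : BddBelow ((fun p : V × V => ‖f - p.1 - p.2‖ + lam * ‖p.2‖) '' (S ×ˢ Set.univ)) := by
    refine ⟨0, ?_⟩
    rintro _ ⟨⟨g, n⟩, ⟨hg, -⟩, rfl⟩
    have := key g n
    have := norm_nonneg (f - g)
    dsimp only
    linarith
  constructor
  · apply le_antisymm
    · apply csInf_le_csInf hAbdd hBne
      rintro _ ⟨g, hg, rfl⟩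
      exact ⟨(g, 0), ⟨hg, trivial⟩, by simp⟩
    · apply le_csInf hAne
      rintro _ ⟨⟨g, n⟩, ⟨hg, -⟩, rfl⟩
      exact le_trans (csInf_le hBbdd ⟨g, hg, rfl⟩) (key g n)
  · intro g hg n
    constructor
    · intro h
      have h1 := h g hg 0
      simp only [norm_zero, mul_zero, sub_zero, add_zero] at h1
      have h2 : ‖f - g‖ ≤ ‖f - g - n‖ + ‖n‖ := by
        calc ‖f - g‖ = ‖(f - g - n) + n‖ := by congr 1; abel
          _ ≤ ‖f - g - n‖ + ‖n‖ := norm_add_le _ _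
      have hn0 : ‖n‖ = 0 := by nlinarith [norm_nonneg n]
      have hn : n = 0 := norm_eq_zero.mp hn0
      subst hn
      refine ⟨rfl, fun g' hg' => ?_⟩
      have := h g' hg' 0
      simpa using this
    · rintro ⟨rfl, hmin⟩
      intro g' hg' n'
      simp only [norm_zero, mul_zero, sub_zero, add_zero]
      exact le_trans (hmin g' hg') (key g' n')
end

section
/- Let V be a normed vector space, f ∈ V, S ⊆ V, and 0 < λ < 1. Then inf over (g,n) ∈ S × V of ‖f - g - n‖ + λ‖n‖ equals λ · inf over g ∈ S of ‖f - g‖. Moreover (g,n) attains the infimum if and only if n = f - g and g attains inf over S of ‖f - g‖ (assuming these infima are attained). -/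
theorem stmt_3 {V : Type*} [NormedAddCommGroup V] [NormedSpace ℝ V]
    (f : V) (S : Set V) (lam : ℝ) (hlam0 : 0 < lam) (hlam1 : lam < 1)
    (hattain : ∃ g ∈ S, ∀ g' ∈ S, ‖f - g‖ ≤ ‖f - g'‖) :
    sInf ((fun p : V × V => ‖f - p.1 - p.2‖ + lam * ‖p.2‖) '' (S ×ˢ Set.univ))
      = lam * sInf ((fun g => ‖f - g‖) '' S) ∧
    ∀ g ∈ S, ∀ n : V,
      ((∀ g' ∈ S, ∀ n' : V,
          ‖f - g - n‖ + lam * ‖n‖ ≤ ‖f - g' - n'‖ + lam * ‖n'‖) ↔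
        (n = f - g ∧ ∀ g' ∈ S, ‖f - g‖ ≤ ‖f - g'‖)) := by
  obtain ⟨g₀, hg₀S, hg₀min⟩ := hattain
  have tri : ∀ g n : V, ‖f - g‖ ≤ ‖f - g - n‖ + ‖n‖ := by
    intro g n
    calc ‖f - g‖ = ‖(f - g - n) + n‖ := by rw [sub_add_cancel]
    _ ≤ ‖f - g - n‖ + ‖n‖ := norm_add_le _ _
  have key : ∀ g n : V, lam * ‖f - g‖ ≤ ‖f - g - n‖ + lam * ‖n‖ := by
    intro g n
    nlinarith [tri g n, norm_nonneg (f - g - n)]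
  have hd : sInf ((fun g => ‖f - g‖) '' S) = ‖f - g₀‖ := by
    apply le_antisymm
    · exact csInf_le ⟨0, by rintro x ⟨g, hg, rfl⟩; exact norm_nonneg _⟩
        ⟨g₀, hg₀S, rfl⟩
    · refine le_csInf ⟨‖f - g₀‖, ⟨g₀, hg₀S, rfl⟩⟩ ?_
      rintro x ⟨g, hg, rfl⟩
      exact hg₀min g hg
  constructor
  · rw [hd]
    apply le_antisymm
    · have hmem : (lam * ‖f - g₀‖) ∈
          ((fun p : V × V => ‖f - p.1 - p.2‖ + lam * ‖p.2‖) '' (S ×ˢ Set.univ)) := by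
        refine ⟨(g₀, f - g₀), ⟨hg₀S, Set.mem_univ _⟩, ?_⟩
        simp
      exact csInf_le ⟨0, by
        rintro x ⟨⟨g, n⟩, ⟨hg, -⟩, rfl⟩
        positivity⟩ hmem
    · refine le_csInf ⟨‖f - g₀ - (f - g₀)‖ + lam * ‖f - g₀‖, ⟨(g₀, f - g₀), ⟨hg₀S, Set.mem_univ _⟩, rfl⟩⟩ ?_
      rintro x ⟨⟨g, n⟩, ⟨hg, -⟩, rfl⟩
      calc lam * ‖f - g₀‖ ≤ lam * ‖f - g‖ := by
            have := hg₀min g hg; nlinarith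
      _ ≤ ‖f - g - n‖ + lam * ‖n‖ := key g n
  · intro g hg n
    constructor
    · intro h
      have h1 : ‖f - g - n‖ + lam * ‖n‖ ≤ lam * ‖f - g‖ := by
        have := h g hg (f - g)
        simpa using this
      have h2 : lam * ‖f - g‖ ≤ ‖f - g - n‖ + lam * ‖n‖ := key g n
      have hn0 : ‖f - g - n‖ = 0 := by
        nlinarith [tri g n, norm_nonneg (f - g - n), norm_nonneg n]
      have hn : n = f - g := (sub_eq_zero.mp (norm_eq_zero.mp hn0)).symm
      refine ⟨hn, fun g' hg' => ?_⟩
      have := h g' hg' (f - g')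
      rw [hn] at this
      simp only [sub_self, norm_zero, zero_add] at this
      nlinarith
    · rintro ⟨rfl, hmin⟩
      intro g' hg' n'
      simp only [sub_self, norm_zero, zero_add]
      calc lam * ‖f - g‖ ≤ lam * ‖f - g'‖ := by
            have := hmin g' hg'; nlinarith
      _ ≤ ‖f - g' - n'‖ + lam * ‖n'‖ := key g' n'
end

section
/- Let V be a normed vector space, f ∈ V, S ⊆ V nonempty. Define φ(λ) = inf over (g,n) ∈ S × V of ‖f - g - n‖ + λ‖n‖, and let d = inf over g ∈ S of ‖f - g‖. Then φ(λ) = λ·d for 0 < λ ≤ 1 and φ(λ) = d for λ ≥ 1. In particular φ is continuous, piecewise linear in λ, and its derivative jumps from d to 0 at λ = 1. -/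
theorem stmt_4 {V : Type*} [NormedAddCommGroup V] [NormedSpace ℝ V]
    (f : V) (S : Set V) (hS : S.Nonempty) :
    (∀ lam : ℝ, 0 < lam → lam ≤ 1 →
      sInf ((fun p : V × V => ‖f - p.1 - p.2‖ + lam * ‖p.2‖) '' (S ×ˢ Set.univ))
        = lam * sInf ((fun g => ‖f - g‖) '' S)) ∧
    (∀ lam : ℝ, 1 ≤ lam →
      sInf ((fun p : V × V => ‖f - p.1 - p.2‖ + lam * ‖p.2‖) '' (S ×ˢ Set.univ))
        = sInf ((fun g => ‖f - g‖) '' S)) := by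
  set B := (fun g => ‖f - g‖) '' S with hB
  have hBne : B.Nonempty := hS.image _
  have hBbd : BddBelow B := ⟨0, fun b ⟨g, _, hg⟩ => hg ▸ norm_nonneg _⟩
  have hAne : ∀ lam : ℝ,
      ((fun p : V × V => ‖f - p.1 - p.2‖ + lam * ‖p.2‖) '' (S ×ˢ Set.univ)).Nonempty := by
    intro lam
    obtain ⟨g, hg⟩ := hS
    exact ⟨_, ⟨(g, 0), ⟨hg, trivial⟩, rfl⟩⟩
  have hAbd : ∀ lam : ℝ, 0 ≤ lam →
      BddBelow ((fun p : V × V => ‖f - p.1 - p.2‖ + lam * ‖p.2‖) '' (S ×ˢ Set.univ)) := by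
    intro lam hlam
    refine ⟨0, fun a ⟨p, _, hp⟩ => ?_⟩
    subst hp
    positivity
  have hdnn : 0 ≤ sInf B := le_csInf hBne (fun b ⟨g, _, hg⟩ => hg ▸ norm_nonneg _)
  constructor
  · intro lam hl0 hl1
    apply le_antisymm
    · -- sInf A ≤ lam * sInf B
      rw [← div_le_iff₀' hl0]
      refine le_csInf hBne ?_
      rintro b ⟨g, hg, rfl⟩
      rw [div_le_iff₀' hl0]
      refine csInf_le (hAbd lam hl0.le) ⟨(g, f - g), ⟨hg, trivial⟩, ?_⟩
      simp
    · refine le_csInf (hAne lam) ?_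
      rintro a ⟨⟨g, n⟩, ⟨hg, -⟩, rfl⟩
      dsimp only
      have h1 : ‖f - g‖ ≤ ‖f - g - n‖ + ‖n‖ := by
        calc ‖f - g‖ = ‖(f - g - n) + n‖ := by rw [sub_add_cancel]
          _ ≤ ‖f - g - n‖ + ‖n‖ := norm_add_le _ _
      have h2 : sInf B ≤ ‖f - g‖ := csInf_le hBbd ⟨g, hg, rfl⟩
      have : lam * sInf B ≤ lam * (‖f - g - n‖ + ‖n‖) := by
        apply mul_le_mul_of_nonneg_left (le_trans h2 h1) hl0.le
      calc lam * sInf B ≤ lam * (‖f - g - n‖ + ‖n‖) := this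
        _ = lam * ‖f - g - n‖ + lam * ‖n‖ := by ring
        _ ≤ ‖f - g - n‖ + lam * ‖n‖ := by nlinarith [norm_nonneg (f - g - n)]
  · intro lam hl1
    apply le_antisymm
    · refine le_csInf hBne ?_
      rintro b ⟨g, hg, rfl⟩
      exact csInf_le (hAbd lam (by linarith)) ⟨(g, 0), ⟨hg, trivial⟩, by simp⟩
    · refine le_csInf (hAne lam) ?_
      rintro a ⟨⟨g, n⟩, ⟨hg, -⟩, rfl⟩
      dsimp only
      have h1 : ‖f - g‖ ≤ ‖f - g - n‖ + ‖n‖ := by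
        calc ‖f - g‖ = ‖(f - g - n) + n‖ := by rw [sub_add_cancel]
          _ ≤ ‖f - g - n‖ + ‖n‖ := norm_add_le _ _
      have h2 : sInf B ≤ ‖f - g‖ := csInf_le hBbd ⟨g, hg, rfl⟩
      have h3 : ‖n‖ ≤ lam * ‖n‖ := by nlinarith [norm_nonneg n]
      linarith
end

section
/- Let V be a normed vector space, f ∈ V, S ⊆ V, λ ∈ (0,1), and ε > 0. Suppose for every v ∈ V there exists n in a subset N ⊆ V with ‖n - v‖ ≤ ε, and 0 ∈ N. If (g₀, n₀) ∈ S × N minimizes L(g,n) = ‖f - g - n‖ + λ‖n‖ over S × N, then ‖f - g₀ - n₀‖ ≤ (1+λ)/(1-λ) · ε. -/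
theorem stmt_5 {V : Type*} [NormedAddCommGroup V] [NormedSpace ℝ V]
    (f : V) (S N : Set V) (lam ε : ℝ) (hlam0 : 0 < lam) (hlam1 : lam < 1)
    (hε : 0 < ε) (hN0 : (0 : V) ∈ N)
    (happrox : ∀ v : V, ∃ n ∈ N, ‖n - v‖ ≤ ε)
    (g₀ n₀ : V) (hg₀ : g₀ ∈ S) (hn₀ : n₀ ∈ N)
    (hmin : ∀ g ∈ S, ∀ n ∈ N,
      ‖f - g₀ - n₀‖ + lam * ‖n₀‖ ≤ ‖f - g - n‖ + lam * ‖n‖) :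
    ‖f - g₀ - n₀‖ ≤ (1 + lam) / (1 - lam) * ε := by
  obtain ⟨n₁, hn₁, hd⟩ := happrox (f - g₀)
  have hkey := hmin g₀ hg₀ n₁ hn₁
  have h1 : ‖f - g₀ - n₁‖ ≤ ε := by
    rw [show f - g₀ - n₁ = -(n₁ - (f - g₀)) by abel, norm_neg]; exact hd
  have hA : ‖f - g₀‖ ≤ ‖f - g₀ - n₀‖ + ‖n₀‖ := by
    have := norm_add_le (f - g₀ - n₀) n₀
    simpa using this
  have hB : ‖n₁‖ ≤ ‖f - g₀‖ + ε := by
    have := norm_add_le (f - g₀) (n₁ - (f - g₀))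
    simp only [add_sub_cancel] at this
    linarith
  have hr : (1 - lam) * ‖f - g₀ - n₀‖ ≤ (1 + lam) * ε := by nlinarith
  rw [div_mul_eq_mul_div, le_div_iff₀ (by linarith)]
  linarith
end

section
/- Let V be a normed vector space, f ∈ V, S ⊆ V, λ ∈ (0,1), and ε > 0. Suppose N ⊆ V contains 0 and for every v ∈ V there exists n ∈ N with ‖n - v‖ ≤ ε. If (g₀, n₀) ∈ S × N minimizes L(g,n) = ‖f - g - n‖ + λ‖n‖ over S × N, then ‖f - g₀‖ ≤ inf over g ∈ S of ‖f - g‖ + ((1+λ)/λ)·ε. -/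
theorem stmt_6 {V : Type*} [NormedAddCommGroup V] [NormedSpace ℝ V]
    (f : V) (S N : Set V) (lam ε : ℝ) (hlam0 : 0 < lam) (hlam1 : lam < 1)
    (hε : 0 < ε) (hN0 : (0 : V) ∈ N)
    (happrox : ∀ v : V, ∃ n ∈ N, ‖n - v‖ ≤ ε)
    (g₀ n₀ : V) (hg₀ : g₀ ∈ S) (hn₀ : n₀ ∈ N)
    (hmin : ∀ g ∈ S, ∀ n ∈ N,
      ‖f - g₀ - n₀‖ + lam * ‖n₀‖ ≤ ‖f - g - n‖ + lam * ‖n‖) :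
    ‖f - g₀‖ ≤ sInf ((fun g => ‖f - g‖) '' S) + (1 + lam) / lam * ε := by
  have key : ∀ g ∈ S, ‖f - g₀‖ ≤ ‖f - g‖ + (1 + lam) / lam * ε := by
    intro g hg
    obtain ⟨n, hn, hnε⟩ := happrox (f - g)
    have h1 : lam * ‖f - g₀‖ ≤ ‖f - g₀ - n₀‖ + lam * ‖n₀‖ := by
      have : ‖f - g₀‖ ≤ ‖f - g₀ - n₀‖ + ‖n₀‖ := by
        calc ‖f - g₀‖ = ‖(f - g₀ - n₀) + n₀‖ := by congr 1; abel
          _ ≤ ‖f - g₀ - n₀‖ + ‖n₀‖ := norm_add_le _ _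
      nlinarith [norm_nonneg (f - g₀ - n₀), norm_nonneg n₀, norm_nonneg (f - g₀)]
    have h2 : ‖f - g - n‖ + lam * ‖n‖ ≤ ε + lam * (‖f - g‖ + ε) := by
      have hA : ‖f - g - n‖ ≤ ε := by
        rw [show f - g - n = -(n - (f - g)) by abel, norm_neg]; exact hnε
      have hB : ‖n‖ ≤ ‖f - g‖ + ε := by
        calc ‖n‖ = ‖(n - (f - g)) + (f - g)‖ := by congr 1; abel
          _ ≤ ‖n - (f - g)‖ + ‖f - g‖ := norm_add_le _ _
          _ ≤ ε + ‖f - g‖ := by linarith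
          _ = ‖f - g‖ + ε := by ring
      nlinarith
    have h3 := hmin g hg n hn
    have h4 : lam * ‖f - g₀‖ ≤ lam * ‖f - g‖ + (1 + lam) * ε := by nlinarith
    have h5 : (1 + lam) * ε = lam * ((1 + lam) / lam * ε) := by field_simp
    nlinarith
  have hne : ((fun g => ‖f - g‖) '' S).Nonempty := ⟨_, ⟨g₀, hg₀, rfl⟩⟩
  have hlb : ‖f - g₀‖ - (1 + lam) / lam * ε ≤ sInf ((fun g => ‖f - g‖) '' S) := by
    apply le_csInf hne
    rintro b ⟨g, hg, rfl⟩
    have := key g hg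
    linarith
  linarith
end

section
/- Let c ≠ 0 be a real constant. There is no twice-differentiable Lagrangian L(q, q̇) : ℝ × ℝ → ℝ with ∂²L/∂q̇² nowhere zero such that for all (q, q̇): c·q̇ = (∂²L/∂q̇²)⁻¹ · (∂L/∂q - (∂²L/∂q̇∂q)·q̇). In other words, the linear damping force f(q,q̇) = c·q̇ cannot be represented by any time-independent Lagrangian via the Euler–Lagrange acceleration formula. -/
/-!
The energy `H = q̇ ∂L/∂q̇ - L` of a Lagrangian is conserved by the flow it generates. The orbits
of `q̈ = c q̇` lie on the lines `q̇ - c q = s`, so `H(q, q̇) = F(q̇ - c q)` for a single function `F`.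
Differentiating in `q̇` gives `q̇ ∂²L/∂q̇²(q, q̇) = F'(q̇ - c q)`; on the line `q̇ = 0` the left side
vanishes while `q̇ - c q` takes every value (as `c ≠ 0`), so `F' ≡ 0` and hence
`∂²L/∂q̇²(q, 1) = 0`.
-/

noncomputable section

namespace Lagrangian

variable {f L : ℝ × ℝ → ℝ}

def partialFst (f : ℝ × ℝ → ℝ) (p : ℝ × ℝ) : ℝ := deriv (fun u => f (u, p.2)) p.1

def partialSnd (f : ℝ × ℝ → ℝ) (p : ℝ × ℝ) : ℝ := deriv (fun w => f (p.1, w)) p.2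

theorem hasDerivAt_slice_fst {a b : ℝ} (hf : DifferentiableAt ℝ f (a, b)) :
    HasDerivAt (fun u => f (u, b)) (fderiv ℝ f (a, b) (1, 0)) a :=
  hf.hasFDerivAt.comp_hasDerivAt a ((hasDerivAt_id a).prodMk (hasDerivAt_const a b))

theorem hasDerivAt_slice_snd {a b : ℝ} (hf : DifferentiableAt ℝ f (a, b)) :
    HasDerivAt (fun w => f (a, w)) (fderiv ℝ f (a, b) (0, 1)) b :=
  hf.hasFDerivAt.comp_hasDerivAt b ((hasDerivAt_const b a).prodMk (hasDerivAt_id b))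

theorem partialFst_eq_fderiv {p : ℝ × ℝ} (hf : DifferentiableAt ℝ f p) :
    partialFst f p = fderiv ℝ f p (1, 0) :=
  (hasDerivAt_slice_fst hf).deriv

theorem partialSnd_eq_fderiv {p : ℝ × ℝ} (hf : DifferentiableAt ℝ f p) :
    partialSnd f p = fderiv ℝ f p (0, 1) :=
  (hasDerivAt_slice_snd hf).deriv

theorem differentiable_partialSnd {n : WithTop ℕ∞} (hf : ContDiff ℝ n f) (hn : 2 ≤ n) :
    Differentiable ℝ (partialSnd f) := by
  have hpartial : partialSnd f = fun p => fderiv ℝ f p (0, 1) :=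
    funext fun p => partialSnd_eq_fderiv (hf.differentiable (two_pos.trans_le hn).ne' p)
  rw [hpartial]
  exact ((hf.fderiv_right (m := 1) hn).clm_apply contDiff_const).differentiable one_ne_zero

theorem hasDerivAt_comp_line {c s t : ℝ} (hf : DifferentiableAt ℝ f (t, s + c * t)) :
    HasDerivAt (fun t => f (t, s + c * t))
      (partialFst f (t, s + c * t) + c * partialSnd f (t, s + c * t)) t := by
  have hline : HasDerivAt (fun t : ℝ => (t, s + c * t)) ((1 : ℝ), c) t :=
    (hasDerivAt_id t).prodMk (by simpa using ((hasDerivAt_id t).const_mul c).const_add s)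
  have hdir : ((1 : ℝ), c) = ((1 : ℝ), (0 : ℝ)) + c • ((0 : ℝ), (1 : ℝ)) := by simp
  have := hf.hasFDerivAt.comp_hasDerivAt t hline
  rwa [hdir, map_add, map_smul, smul_eq_mul, ← partialFst_eq_fderiv hf,
    ← partialSnd_eq_fderiv hf] at this

def energy (L : ℝ × ℝ → ℝ) (p : ℝ × ℝ) : ℝ := p.2 * partialSnd L p - L p

theorem hasDerivAt_energy_snd {a b : ℝ} (hL : DifferentiableAt ℝ L (a, b))
    (hG : DifferentiableAt ℝ (partialSnd L) (a, b)) :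
    HasDerivAt (fun v => energy L (a, v)) (b * partialSnd (partialSnd L) (a, b)) b := by
  have hGv := hasDerivAt_slice_snd hG
  rw [← partialSnd_eq_fderiv hG] at hGv
  have hLv := hasDerivAt_slice_snd hL
  rw [← partialSnd_eq_fderiv hL] at hLv
  exact (((hasDerivAt_id b).fun_mul hGv).fun_sub hLv).congr_deriv (by simp only [id]; ring)

theorem hasDerivAt_energy_line {c s t : ℝ} (hL : DifferentiableAt ℝ L (t, s + c * t))
    (hG : DifferentiableAt ℝ (partialSnd L) (t, s + c * t)) :
    HasDerivAt (fun t => energy L (t, s + c * t))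
      ((s + c * t) * (partialFst (partialSnd L) (t, s + c * t)
          + c * partialSnd (partialSnd L) (t, s + c * t)) - partialFst L (t, s + c * t)) t := by
  have hv : HasDerivAt (fun t : ℝ => s + c * t) c t := by
    simpa using ((hasDerivAt_id t).const_mul c).const_add s
  exact ((hv.fun_mul (hasDerivAt_comp_line hG)).fun_sub (hasDerivAt_comp_line hL)).congr_deriv
    (by ring)

/-- The Euler–Lagrange equation `∂²L/∂q̇² q̈ + ∂²L/∂q̇∂q q̇ = ∂L/∂q` along `q̈ = c q̇`. -/
def GeneratesLinearDamping (L : ℝ × ℝ → ℝ) (c : ℝ) : Prop :=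
  ∀ a b, c * b * partialSnd (partialSnd L) (a, b) =
    partialFst L (a, b) - partialFst (partialSnd L) (a, b) * b

variable {c : ℝ}

theorem energy_eq_of_linearDamping (hL : Differentiable ℝ L)
    (hG : Differentiable ℝ (partialSnd L))
    (hEL : GeneratesLinearDamping L c)
    (a b : ℝ) : energy L (a, b) = energy L (0, b - c * a) := by
  set s := b - c * a
  have hderiv (t : ℝ) : HasDerivAt (fun t => energy L (t, s + c * t)) 0 t :=
    (hasDerivAt_energy_line (hL _) (hG _)).congr_deriv (by linear_combination hEL t (s + c * t))
  have hconst := is_const_of_deriv_eq_zero (fun t => (hderiv t).differentiableAt)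
    (fun t => (hderiv t).deriv) a 0
  simpa [s] using hconst

theorem mul_partialSnd_partialSnd_eq_of_linearDamping (hL : Differentiable ℝ L)
    (hG : Differentiable ℝ (partialSnd L))
    (hEL : GeneratesLinearDamping L c)
    (a b : ℝ) :
    b * partialSnd (partialSnd L) (a, b) =
      (b - c * a) * partialSnd (partialSnd L) (0, b - c * a) := by
  have hslice : (fun v => energy L (a, v)) = fun v => energy L (0, v - c * a) :=
    funext fun v => energy_eq_of_linearDamping hL hG hEL a v
  have hderiv := hasDerivAt_energy_snd (hL (a, b)) (hG (a, b))
  rw [hslice] at hderiv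
  exact hderiv.unique ((hasDerivAt_energy_snd (hL _) (hG _)).comp_sub_const b (c * a))

end Lagrangian

end

/-- Lemma A.2: linear damping `f(q, q̇) = c·q̇` with `c ≠ 0` is not generated by
any twice-differentiable time-independent Lagrangian via the Euler–Lagrange
acceleration formula. -/
theorem stmt_8 (c : ℝ) (hc : c ≠ 0) :
    ¬ ∃ L : ℝ × ℝ → ℝ, ContDiff ℝ 2 L ∧
      (∀ a b : ℝ, deriv (fun v => deriv (fun w => L (a, w)) v) b ≠ 0) ∧
      (∀ a b : ℝ, c * b =
        (deriv (fun v => deriv (fun w => L (a, w)) v) b)⁻¹ *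
          (deriv (fun u => L (u, b)) a
            - deriv (fun u => deriv (fun w => L (u, w)) b) a * b)) := by
  rintro ⟨L, hL, hL_vv, hEL⟩
  have hdamp : Lagrangian.GeneratesLinearDamping L c := fun a b => by
    have h := hEL a b
    rwa [inv_mul_eq_div, eq_div_iff (hL_vv a b)] at h
  have h := Lagrangian.mul_partialSnd_partialSnd_eq_of_linearDamping
    (hL.differentiable two_ne_zero) (Lagrangian.differentiable_partialSnd hL le_rfl) hdamp (-1 / c) 0
  rw [zero_mul, show (0 : ℝ) - c * (-1 / c) = 1 by field_simp; ring, one_mul] at h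
  exact hL_vv 0 1 h.symm
end

section
/- Let V be a normed space and S ⊆ V. Define, for f ∈ V and λ > 0, the optimal non-conservative magnitude m(λ) = ‖n*‖ where (g*, n*) minimizes ‖f - g - n‖ + λ‖n‖ over S × V, assuming minimizers exist and d = inf_{g∈S}‖f-g‖ is attained. Then m(λ) = d for every λ ∈ (0,1) and m(λ) = 0 for every λ > 1. Consequently λ ↦ m(λ) is a step function with a jump of size d at λ = 1, and d > 0 if and only if f ∉ S-attainable set. -/
/-- The optimal non-conservative magnitude `m(λ)` equals `d` for `λ < 1` and `0`
for `λ > 1`, where `d = min_{g ∈ S} ‖f - g‖`; moreover `d > 0` iff `f ∉ S`. -/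
theorem stmt_14 {V : Type*} [NormedAddCommGroup V] [NormedSpace ℝ V]
    (f : V) (S : Set V) (gstar : V) (hgstar : gstar ∈ S)
    (hgmin : ∀ g ∈ S, ‖f - gstar‖ ≤ ‖f - g‖) :
    (∀ lam : ℝ, 0 < lam → lam < 1 → ∀ g ∈ S, ∀ n : V,
      (∀ g' ∈ S, ∀ n' : V,
        ‖f - g - n‖ + lam * ‖n‖ ≤ ‖f - g' - n'‖ + lam * ‖n'‖) →
      ‖n‖ = ‖f - gstar‖) ∧
    (∀ lam : ℝ, 1 < lam → ∀ g ∈ S, ∀ n : V,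
      (∀ g' ∈ S, ∀ n' : V,
        ‖f - g - n‖ + lam * ‖n‖ ≤ ‖f - g' - n'‖ + lam * ‖n'‖) →
      ‖n‖ = 0) ∧
    (0 < ‖f - gstar‖ ↔ f ∉ S) := by
  refine ⟨?_, ?_, ?_⟩
  · intro lam hl0 hl1 g hg n hmin
    have h1 : ‖f - g - n‖ + lam * ‖n‖ ≤ lam * ‖f - gstar‖ := by
      have := hmin gstar hgstar (f - gstar)
      simpa using this
    have hd : ‖f - gstar‖ ≤ ‖f - g - n‖ + ‖n‖ := by
      calc ‖f - gstar‖ ≤ ‖f - g‖ := hgmin g hg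
        _ ≤ ‖f - g - n‖ + ‖n‖ := by
            have := norm_add_le (f - g - n) n
            simpa using this
    -- show ‖f - g - n‖ = 0
    have hz : ‖f - g - n‖ = 0 := by
      by_contra hne
      have hpos : 0 < ‖f - g - n‖ := lt_of_le_of_ne (norm_nonneg _) (Ne.symm hne)
      have : lam * ‖f - gstar‖ ≤ lam * (‖f - g - n‖ + ‖n‖) :=
        mul_le_mul_of_nonneg_left hd hl0.le
      have hlt : lam * (‖f - g - n‖ + ‖n‖) < ‖f - g - n‖ + lam * ‖n‖ := by
        have : lam * ‖f - g - n‖ < ‖f - g - n‖ := by nlinarith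
        nlinarith
      linarith
    have hfg : f - g = n := by
      exact sub_eq_zero.mp (norm_eq_zero.mp hz)
    have hle : ‖n‖ ≤ ‖f - gstar‖ := by
      rw [hz] at h1
      nlinarith
    have hge : ‖f - gstar‖ ≤ ‖n‖ := by
      rw [← hfg]; exact hgmin g hg
    linarith
  · intro lam hl g hg n hmin
    have h1 : ‖f - g - n‖ + lam * ‖n‖ ≤ ‖f - g‖ := by
      have := hmin g hg 0
      simpa using this
    have hd : ‖f - g‖ ≤ ‖f - g - n‖ + ‖n‖ := by
      have := norm_add_le (f - g - n) n
      simpa using this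
    nlinarith [norm_nonneg n]
  · constructor
    · intro hpos hf
      have := hgmin f hf
      simp at this
      simp [this] at hpos
    · intro hf
      rcases lt_or_eq_of_le (norm_nonneg (f - gstar)) with h | h
      · exact h
      · exfalso
        have : f = gstar := sub_eq_zero.mp (norm_eq_zero.mp h.symm)
        exact hf (this ▸ hgstar)
end
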